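/- arXiv:2112.03484 — 2 statements merged into one kernel-verified Lean document; each statement's English description precedes it below -/
import Mathlib

section
/- Let M_1, …, M_n be DFAs over a common alphabet Σ, and let G be the labeled graph obtained from the second reduction construction applied to M_1, …, M_n. Then ⋃_{i=1}^n L(M_i) = Σ* if and only if ⟨G⟩ has a deterministic presentation with exactly 2 vertices. -/
/-- A labeled graph over vertex type `V` and alphabet `A`, given by its
labeled-edge relation: `Edge p a q` means there is an edge labeled `a`
from `p` to `q`. -/
structure LabeledGraph (V A : Type) where
  Edge : V → A → V → Prop

namespace LabeledGraph

variable {V A : Type}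

/-- `G.Walk p w q` : there is a (finite) path from `p` to `q` labeled `w`. -/
def Walk (G : LabeledGraph V A) : V → List A → V → Prop
  | p, [], q => p = q
  | p, a :: w, q => ∃ r, G.Edge p a r ∧ Walk G r w q

/-- The follower set of a vertex: labels of finite paths starting at `q`. -/
def follower (G : LabeledGraph V A) (q : V) : Set (List A) :=
  { w | ∃ q', G.Walk q w q' }

/-- The transition action on sets of vertices: `S·w`. -/
def transSet (G : LabeledGraph V A) (S : Set V) (w : List A) : Set V :=
  { q' | ∃ q ∈ S, G.Walk q w q' }

/-- `G` is deterministic (right-resolving). -/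
def Deterministic (G : LabeledGraph V A) : Prop :=
  ∀ p a q q', G.Edge p a q → G.Edge p a q' → q = q'

/-- `G` is essential: every vertex has an outgoing and an incoming edge. -/
def Essential (G : LabeledGraph V A) : Prop :=
  ∀ q, (∃ a r, G.Edge q a r) ∧ (∃ a p, G.Edge p a q)

/-- The sofic shift presented by `G`: labels of bi-infinite paths. -/
def shift (G : LabeledGraph V A) : Set (ℤ → A) :=
  { x | ∃ v : ℤ → V, ∀ j : ℤ, G.Edge (v j) (x j) (v (j + 1)) }

/-- `w` is a synchronizing word for `G`: `Q_G · w` is a singleton. -/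
def SyncWord (G : LabeledGraph V A) (w : List A) : Prop :=
  ∃ r, G.transSet Set.univ w = {r}

/-- A vertex `q` is synchronizing: some word synchronizes to `q`. -/
def SyncVertex (G : LabeledGraph V A) (q : V) : Prop :=
  ∃ w, G.transSet Set.univ w = {q}

/-- `G` is synchronizing: every vertex is synchronizing. -/
def Synchronizing (G : LabeledGraph V A) : Prop :=
  ∀ q, G.SyncVertex q

/-- `G` is follower-separated. -/
def FollowerSeparated (G : LabeledGraph V A) : Prop :=
  ∀ p q, G.follower p = G.follower q → p = q

/-- `G` is irreducible (strongly connected). -/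
def StronglyConnected (G : LabeledGraph V A) : Prop :=
  ∀ p q, ∃ w, G.Walk p w q

/-- `q` is reachable from `p`. -/
def Reachable (G : LabeledGraph V A) (p q : V) : Prop :=
  ∃ w, G.Walk p w q

/-- `C` is an irreducible component: an equivalence class of mutual reachability. -/
def IsIrredComponent (G : LabeledGraph V A) (C : Set V) : Prop :=
  ∃ p, C = { q | G.Reachable p q ∧ G.Reachable q p }

/-- `C` is terminal: everything reachable from `C` lies in `C`. -/
def TerminalSet (G : LabeledGraph V A) (C : Set V) : Prop :=
  ∀ p ∈ C, ∀ q, G.Reachable p q → q ∈ C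

/-- `C` is initial: everything that reaches `C` lies in `C`. -/
def InitialSet (G : LabeledGraph V A) (C : Set V) : Prop :=
  ∀ q ∈ C, ∀ p, G.Reachable p q → p ∈ C

/-- Subgraph induced by a set `P` of vertices. -/
def induce (G : LabeledGraph V A) (P : Set V) : LabeledGraph P A where
  Edge := fun p a q => G.Edge p.1 a q.1

/-- The graph `Ĝ`: vertices are ordered pairs of distinct vertices of `G`,
with an edge labeled `a` from `(p₁,p₂)` to `(q₁,q₂)` iff `G` has edges labeled
`a` from `p₁` to `q₁` and from `p₂` to `q₂`. -/
def pairGraph (G : LabeledGraph V A) : LabeledGraph { pq : V × V // pq.1 ≠ pq.2 } A where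
  Edge := fun x a y => G.Edge x.1.1 a y.1.1 ∧ G.Edge x.1.2 a y.1.2

end LabeledGraph

/-- The word `w` appears in the bi-infinite sequence `x`. -/
def AppearsIn {A : Type} (w : List A) (x : ℤ → A) : Prop :=
  ∃ i : ℤ, ∀ n : Fin w.length, x (i + (n : ℕ)) = w.get n

/-- The language of a subset of the full shift: all finite words appearing
in some point of `X`. -/
def lang {A : Type} (X : Set (ℤ → A)) : Set (List A) :=
  { w | ∃ x ∈ X, AppearsIn w x }

/-- `X` is a shift space. -/
def IsShiftSpace {A : Type} (X : Set (ℤ → A)) : Prop :=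
  ∃ F : Set (List A), X = { x | ∀ w ∈ F, ¬ AppearsIn w x }

/-- `X` is a shift of finite type. -/
def IsSFT {A : Type} (X : Set (ℤ → A)) : Prop :=
  ∃ F : Set (List A), F.Finite ∧ X = { x | ∀ w ∈ F, ¬ AppearsIn w x }

/-- `w` is intrinsically synchronizing for `X`. -/
def IntrinsicallySync {A : Type} (X : Set (ℤ → A)) (w : List A) : Prop :=
  w ∈ lang X ∧ ∀ u v, u ++ w ∈ lang X → w ++ v ∈ lang X → u ++ (w ++ v) ∈ lang X

/-- `X` is an irreducible shift space. -/
def IrreducibleShift {A : Type} (X : Set (ℤ → A)) : Prop :=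
  ∀ u ∈ lang X, ∀ v ∈ lang X, ∃ w, u ++ (w ++ v) ∈ lang X

/-- The follower set of a word `u` in `X`. -/
def followerX {A : Type} (X : Set (ℤ → A)) (u : List A) : Set (List A) :=
  { w | u ++ w ∈ lang X }

/-- `X` is `M`-step: every word of `B(X)` of length at least `M` is
intrinsically synchronizing for `X`. -/
def MStep {A : Type} (X : Set (ℤ → A)) (M : ℕ) : Prop :=
  ∀ w ∈ lang X, M ≤ w.length → IntrinsicallySync X w

/-- A deterministic finite automaton over state type `Q` and alphabet `A`. -/
structure DFA' (Q A : Type) where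
  step : Q → A → Q
  start : Q
  accept : Set Q

/-- Extended transition function. -/
def DFA'.evalFrom {Q A : Type} (M : DFA' Q A) (q : Q) (w : List A) : Q :=
  w.foldl M.step q

/-- The language of a DFA. -/
def DFA'.lang {Q A : Type} (M : DFA' Q A) : Set (List A) :=
  { w | M.evalFrom M.start w ∈ M.accept }

/-- Alphabet `Σ ∪ {◁, ▷, ℓ, ⋆}`. -/
inductive SymB (A : Type) : Type
  | letter : A → SymB A
  | lm : SymB A    -- ◁
  | rm : SymB A    -- ▷
  | ell : SymB A   -- ℓ
  | star : SymB A  -- ⋆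

/-- Vertices of the second reduction construction: the terminal state `t`,
the special state `s*`, and the DFA states. -/
inductive V2 {n : ℕ} (Q : Fin n → Type) : Type
  | t : V2 Q
  | sstar : V2 Q
  | st : (i : Fin n) → Q i → V2 Q

/-- Edges of the second reduction construction. -/
inductive Red2Edge {n : ℕ} {Q : Fin n → Type} {A : Type} (M : ∀ i, DFA' (Q i) A) :
    V2 Q → SymB A → V2 Q → Prop
  /-- self loop labeled `⋆` on `t` -/
  | tLoop : Red2Edge M .t .star .t
  /-- self loop labeled `a` on `s*` for each `a ∈ Σ` -/
  | sstarLetter (a : A) : Red2Edge M .sstar (.letter a) .sstar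
  /-- self loop labeled `ℓ` on `s*` -/
  | sstarEll : Red2Edge M .sstar .ell .sstar
  /-- edge labeled `▷` from `s*` to `t` -/
  | sstarExit : Red2Edge M .sstar .rm .t
  /-- the embedded DFA transitions -/
  | dfaStep (i : Fin n) (q : Q i) (a : A) :
      Red2Edge M (.st i q) (.letter a) (.st i ((M i).step q a))
  /-- edge labeled `◁` from each state of `M_i` to `s_i` -/
  | back (i : Fin n) (q : Q i) : Red2Edge M (.st i q) .lm (.st i ((M i).start))
  /-- edge labeled `▷` from each accepting state of `M_i` to `t` -/
  | exitAcc (i : Fin n) (q : Q i) :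
      q ∈ (M i).accept → Red2Edge M (.st i q) .rm .t
  /-- self loop labeled `ℓ` on each DFA state -/
  | ellLoop (i : Fin n) (q : Q i) : Red2Edge M (.st i q) .ell (.st i q)

/-- The labeled graph `G` of the second reduction construction. -/
def Red2 {n : ℕ} {Q : Fin n → Type} {A : Type} (M : ∀ i, DFA' (Q i) A) :
    LabeledGraph (V2 Q) (SymB A) where
  Edge := Red2Edge M

/-- The two-vertex graph `H` (vertices `false = q₁` and `true = q₂`):
self loops on `q₁` labeled `◁`, `ℓ`, and each `a ∈ Σ`; an edge labeled `▷`
from `q₁` to `q₂`; and a self loop labeled `⋆` on `q₂`. -/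
def H2 (A : Type) : LabeledGraph Bool (SymB A) where
  Edge := fun x c y =>
    (x = false ∧ y = false ∧ (c = .lm ∨ c = .ell ∨ ∃ a, c = .letter a)) ∨
    (x = false ∧ y = true ∧ c = .rm) ∨
    (x = true ∧ y = true ∧ c = .star)

/-!
If every word lies in some `L(Mᵢ)`, then `⟨G⟩` is the shift of the two-vertex graph `H2`. A left
ray of symbols `◁, ℓ, a` followed by `▷` is read by `G` inside some `Mᵢ` ending in an accepting
state, because the letters after the last `◁` form a word that some `Mᵢ` accepts; by König's lemma
these half-infinite runs yield bi-infinite ones.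

Conversely, let `H` be a two-vertex presentation of `⟨G⟩`. In `⟨G⟩` the symbols `▷` and `⋆` are
always followed by `⋆`, and gluing two runs of `H` at a common vertex stays in `⟨H⟩ = ⟨G⟩`. Applied
to the runs of `ℓ^∞ ▷ ⋆^∞` and `ℓ^∞ s ℓ^∞`, this forces a vertex `c` carrying loops for `◁`, `ℓ` and
all letters and an edge `▷` to the other vertex, which carries a `⋆` loop. So `ℓ^∞ ◁ u ▷ ⋆^∞` lies
in `⟨H⟩ = ⟨G⟩`, and a run of `G` on it shows that some `Mᵢ` accepts `u`.
-/

def padded {α : Type} (l : α) (w : List α) (r : α) : ℤ → α :=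
  fun j => if j < 0 then l else w.getD j.toNat r

@[simp]
theorem padded_natCast {α : Type} (l : α) (w : List α) (r : α) (k : ℕ) :
    padded l w r k = w.getD k r := by
  simp [padded]

namespace LabeledGraph

variable {V W A : Type}

def IsRun (G : LabeledGraph V A) (x : ℤ → A) (v : ℤ → V) : Prop :=
  ∀ j, G.Edge (v j) (x j) (v (j + 1))

theorem IsRun.glue {G : LabeledGraph V A} {x y : ℤ → A} {v w : ℤ → V}
    (hx : G.IsRun x v) (hy : G.IsRun y w) {m k : ℤ} (h : v m = w k) :
    G.IsRun (fun j => if j < m then x j else y (j - m + k))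
      (fun j => if j < m then v j else w (j - m + k)) := by
  intro j
  rcases lt_trichotomy (j + 1) m with hj | hj | hj
  · simpa [show j < m by omega, hj] using hx j
  · simpa [show j < m by omega, hj, h] using hx j
  · simpa [show ¬j < m by omega, show ¬j + 1 < m by omega, sub_add_eq_add_sub,
      add_right_comm] using hy (j - m + k)

/-- König's lemma for bi-infinite runs in a finite graph. -/
theorem mem_shift_of_forall_exists_run [Finite V] {G : LabeledGraph V A} {x : ℤ → A}
    (h : ∀ K : ℤ, ∃ v : ℤ → V, ∀ j, K ≤ j → G.Edge (v j) (x j) (v (j + 1))) :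
    x ∈ G.shift := by
  choose v hv using h
  let U : Ultrafilter ℤ := Ultrafilter.of Filter.atBot
  have hle : ∀ j, ∀ᶠ K in (U : Filter ℤ), K ≤ j :=
    fun j => Ultrafilter.of_le _ (Filter.eventually_le_atBot j)
  choose c hc using fun j => (U.map fun K => v K j).eq_pure_of_finite
  have hagree : ∀ j, ∀ᶠ K in (U : Filter ℤ), v K j = c j := fun j =>
    Ultrafilter.mem_map.1 (by rw [hc j]; exact Set.mem_singleton _)
  refine ⟨c, fun j => ?_⟩
  obtain ⟨K, hK, hj, hj'⟩ := ((hle j).and ((hagree j).and (hagree (j + 1)))).exists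
  rw [← hj, ← hj']
  exact hv K j hK

theorem shift_subset_of_map {G : LabeledGraph V A} {H : LabeledGraph W A} (f : V → W)
    (hf : ∀ p c q, G.Edge p c q → H.Edge (f p) c (f q)) : G.shift ⊆ H.shift :=
  fun _ ⟨v, hv⟩ => ⟨f ∘ v, fun j => hf _ _ _ (hv j)⟩

def comap (G : LabeledGraph V A) (f : W → V) : LabeledGraph W A where
  Edge p c q := G.Edge (f p) c (f q)

theorem Deterministic.comap {G : LabeledGraph V A} (hG : G.Deterministic) {f : W → V}
    (hf : Function.Injective f) : (G.comap f).Deterministic :=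
  fun _ _ _ _ h h' => hf (hG _ _ _ _ h h')

theorem Essential.comap {G : LabeledGraph V A} (hG : G.Essential) (e : W ≃ V) :
    (G.comap e).Essential := by
  intro q
  obtain ⟨⟨a, r, hr⟩, ⟨b, p, hp⟩⟩ := hG (e q)
  exact ⟨⟨a, e.symm r, by simpa [LabeledGraph.comap] using hr⟩,
    ⟨b, e.symm p, by simpa [LabeledGraph.comap] using hp⟩⟩

theorem shift_comap_equiv (G : LabeledGraph V A) (e : W ≃ V) : (G.comap e).shift = G.shift :=
  (shift_subset_of_map e fun _ _ _ h => h).antisymm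
    (shift_subset_of_map e.symm fun _ _ _ h => by simpa [LabeledGraph.comap] using h)

theorem walk_of_forall_edge {G : LabeledGraph V A} (v : ℕ → V) (w : List A)
    (h : ∀ k (hk : k < w.length), G.Edge (v k) w[k] (v (k + 1))) :
    G.Walk (v 0) w (v w.length) := by
  induction w generalizing v with
  | nil => rfl
  | cons a w ih =>
    exact ⟨v 1, h 0 (by simp), ih (fun k => v (k + 1)) fun k hk => h (k + 1) (by simpa using hk)⟩

theorem IsRun.walk_padded {G : LabeledGraph V A} {l r : A} {w : List A} {v : ℤ → V} (h : G.IsRun (padded l w r) v) :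
    G.Walk (v 0) w (v w.length) :=
  walk_of_forall_edge (fun k => v k) w fun k hk => by
    simpa only [padded_natCast, List.getD_eq_getElem _ _ hk, Nat.cast_succ] using h k

theorem padded_mem_shift {G : LabeledGraph V A} {p q : V} {l s r : A} {w : List A} (hl : G.Edge p l p)
    (hw : ∀ c ∈ w, G.Edge p c p) (hs : G.Edge p s q) (hr : G.Edge q r q) :
    padded l (w ++ [s]) r ∈ G.shift := by
  refine ⟨fun j => if j ≤ w.length then p else q, fun j => ?_⟩
  rcases lt_or_ge j 0 with hj | hj
  · simpa [padded, hj, show j ≤ w.length by omega, show j + 1 ≤ w.length by omega] using hl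
  obtain ⟨k, rfl⟩ := Int.eq_ofNat_of_zero_le hj
  rcases lt_trichotomy k w.length with hk | rfl | hk
  · simpa [List.getElem_append_left hk, hk.le,
      show (k : ℤ) + 1 ≤ w.length by omega] using hw _ (List.getElem_mem hk)
  · simpa using hs
  · simpa [List.getD_append_right _ _ _ _ hk.le, show ¬k ≤ w.length by omega,
      show ¬(k : ℤ) + 1 ≤ w.length by omega, show 0 < k - w.length by omega] using hr

end LabeledGraph

def SymB.IsInner {A : Type} (c : SymB A) : Prop :=
  c = .lm ∨ c = .ell ∨ ∃ a, c = .letter a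

theorem SymB.IsInner.ne_star {A : Type} {c : SymB A} (hc : c.IsInner) : c ≠ .star := by
  obtain rfl | rfl | ⟨a, rfl⟩ := hc <;> simp

section TwoVertexGraph

variable {A : Type}

theorem H2_deterministic : (H2 A).Deterministic := by
  rintro p c q q' (h | h | h) (h' | h' | h') <;> grind [SymB.IsInner]

theorem H2_essential : (H2 A).Essential := by
  rintro (_ | _)
  · exact ⟨⟨.ell, false, .inl ⟨rfl, rfl, .inr (.inl rfl)⟩⟩,
      ⟨.ell, false, .inl ⟨rfl, rfl, .inr (.inl rfl)⟩⟩⟩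
  · exact ⟨⟨.star, true, .inr (.inr ⟨rfl, rfl, rfl⟩)⟩, ⟨.star, true, .inr (.inr ⟨rfl, rfl, rfl⟩)⟩⟩

theorem H2_run_cases {x : ℤ → SymB A} {v : ℤ → Bool} (hv : (H2 A).IsRun x v) :
    (∀ j, x j = .star) ∨ (∀ j, (x j).IsInner) ∨
      ∃ j₀, (∀ j < j₀, (x j).IsInner) ∧ x j₀ = .rm ∧ ∀ j > j₀, x j = .star := by
  have hstay : ∀ j, v j = false → v (j + 1) = false → (x j).IsInner := fun j h h' => by
    simpa [H2, h, h', SymB.IsInner] using hv j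
  have hexit : ∀ j, v j = false → v (j + 1) = true → x j = .rm := fun j h h' => by
    simpa [H2, h, h'] using hv j
  have htrue : ∀ j, v j = true → v (j + 1) = true ∧ x j = .star := fun j h => by
    simpa [H2, h] using hv j
  have hmono : ∀ j j', j ≤ j' → v j = true → v j' = true := fun j j' hjj' h =>
    Int.leInduction h (fun k _ hk => (htrue k hk).1) j' hjj'
  have hfalse : ∀ j j', j ≤ j' → v j' = false → v j = false := fun j j' hjj' h => by
    simpa using mt (hmono j j' hjj') (by simpa using h)
  by_cases hall : ∀ j, v j = true
  · exact .inl fun j => (htrue j (hall j)).2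
  obtain ⟨j₁, hj₁⟩ : ∃ j, v j = false := by simpa using hall
  by_cases hbdd : ∃ b, ∀ j, v j = false → j ≤ b
  · obtain ⟨j₀, hj₀, hmax⟩ := Int.exists_greatest_of_bdd hbdd ⟨j₁, hj₁⟩
    have hafter : ∀ j > j₀, v j = true := fun j hj => by
      by_contra h
      exact absurd (hmax j (by simpa using h)) (by omega)
    refine .inr (.inr ⟨j₀, fun j hj => hstay j (hfalse j j₀ hj.le hj₀)
      (hfalse _ j₀ (by omega) hj₀), hexit j₀ hj₀ (hafter _ (by omega)),
      fun j hj => (htrue j (hafter j hj)).2⟩)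
  · push Not at hbdd
    have hall' : ∀ j, v j = false := fun j => by
      obtain ⟨j', hj', hjj'⟩ := hbdd j
      exact hfalse j j' hjj'.le hj'
    exact .inr (.inl fun j => hstay j (hall' j) (hall' (j + 1)))

end TwoVertexGraph

def DFA'.symStep {Q A : Type} (M : DFA' Q A) (q : Q) : SymB A → Q
  | .letter a => M.step q a
  | .lm => M.start
  | _ => q

def stripStep {A : Type} (acc : List A) : SymB A → List A
  | .letter a => acc ++ [a]
  | .lm => []
  | _ => acc

theorem DFA'.foldl_symStep {Q A : Type} (M : DFA' Q A) (w : List (SymB A)) (acc : List A) :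
    w.foldl M.symStep (M.evalFrom M.start acc) = M.evalFrom M.start (w.foldl stripStep acc) := by
  induction w generalizing acc with
  | nil => rfl
  | cons c w ih =>
    cases c with
    | letter a =>
      have : M.symStep (M.evalFrom M.start acc) (.letter a) = M.evalFrom M.start (acc ++ [a]) := by
        simp [DFA'.symStep, DFA'.evalFrom]
      rw [List.foldl_cons, this]
      exact ih (acc ++ [a])
    | lm => exact ih []
    | rm | ell | star => exact ih acc

def window {α : Type} (x : ℤ → α) (K j : ℤ) : List α :=
  (List.range (j - K).toNat).map fun k : ℕ => x (K + k)

theorem window_succ {α : Type} (x : ℤ → α) {K j : ℤ} (h : K ≤ j) :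
    window x K (j + 1) = window x K j ++ [x j] := by
  rw [window, window, show (j + 1 - K).toNat = (j - K).toNat + 1 by omega, List.range_succ,
    List.map_append]
  simp only [List.map_cons, List.map_nil, List.append_cancel_left_eq, List.cons.injEq, and_true]
  congr 1
  omega

def DFA'.windowState {Q A : Type} (M : DFA' Q A) (x : ℤ → SymB A) (K j : ℤ) : Q :=
  (window x K j).foldl M.symStep M.start

theorem DFA'.windowState_succ {Q A : Type} (M : DFA' Q A) (x : ℤ → SymB A) {K j : ℤ}
    (h : K ≤ j) : M.windowState x K (j + 1) = M.symStep (M.windowState x K j) (x j) := by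
  simp [DFA'.windowState, window_succ x h, List.foldl_append]

theorem DFA'.windowState_eq_evalFrom {Q A : Type} (M : DFA' Q A) (x : ℤ → SymB A) (K j : ℤ) :
    M.windowState x K j = M.evalFrom M.start ((window x K j).foldl stripStep []) :=
  M.foldl_symStep _ []

section SecondReduction

open LabeledGraph

variable {n : ℕ} {Q : Fin n → Type} {A : Type} {M : ∀ i, DFA' (Q i) A}

@[simp]
theorem red2_edge : (Red2 M).Edge = Red2Edge M := rfl

theorem red2Edge_symStep (i : Fin n) (q : Q i) {c : SymB A} (hc : c.IsInner) :
    Red2Edge M (.st i q) c (.st i ((M i).symStep q c)) := by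
  obtain rfl | rfl | ⟨a, rfl⟩ := hc
  · exact .back i q
  · exact .ellLoop i q
  · exact .dfaStep i q a

theorem red2_shift_subset_H2 (M : ∀ i, DFA' (Q i) A) : (Red2 M).shift ⊆ (H2 A).shift := by
  refine shift_subset_of_map (fun | .t => true | _ => false) fun p c q h => ?_
  cases h <;> simp [H2]

instance [∀ i, Finite (Q i)] : Finite (V2 Q) :=
  Finite.of_injective (fun v : V2 Q => match v with
    | .t => (none : Option (Option (Σ i, Q i)))
    | .sstar => some none
    | .st i q => some (some ⟨i, q⟩))
    (by rintro (_ | _ | ⟨i, q⟩) (_ | _ | ⟨j, r⟩) h <;> simp_all)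

theorem H2_shift_subset_red2 [∀ i, Finite (Q i)] (hn : 0 < n)
    (hU : ∀ w : List A, ∃ i, w ∈ (M i).lang) : (H2 A).shift ⊆ (Red2 M).shift := by
  rintro x ⟨v, hv⟩
  rcases H2_run_cases hv with hstar | hinner | ⟨j₀, hinner, hrm, hstar⟩
  · exact ⟨fun _ => .t, fun j => hstar j ▸ .tLoop⟩
  · refine mem_shift_of_forall_exists_run fun K => ?_
    let i : Fin n := ⟨0, hn⟩
    refine ⟨fun j => .st i ((M i).windowState x K j), fun j hj => ?_⟩
    simpa only [red2_edge, (M i).windowState_succ x hj] using red2Edge_symStep i _ (hinner j)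
  · refine mem_shift_of_forall_exists_run fun K => ?_
    obtain ⟨i, hi⟩ := hU ((window x (min K j₀) j₀).foldl stripStep [])
    refine ⟨fun j => if j ≤ j₀ then .st i ((M i).windowState x (min K j₀) j) else .t,
      fun j hj => ?_⟩
    rcases lt_trichotomy j j₀ with h | rfl | h
    · simpa [h.le, show j + 1 ≤ j₀ by omega, (M i).windowState_succ x (min_le_of_left_le hj)]
        using red2Edge_symStep i _ (hinner j h)
    · simpa [hrm] using Red2Edge.exitAcc i _ (((M i).windowState_eq_evalFrom ..) ▸ hi)
    · simpa [h.not_ge, show ¬j + 1 ≤ j₀ by omega, hstar j h] using Red2Edge.tLoop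

theorem red2Edge_target_of_rm_or_star {p q : V2 Q} {c : SymB A} (h : Red2Edge M p c q)
    (hc : c = .rm ∨ c = .star) : q = .t := by
  rcases hc with rfl | rfl <;> cases h <;> rfl

theorem red2Edge_star_of_source_t {q : V2 Q} {c : SymB A} (h : Red2Edge M .t c q) :
    c = .star := by
  cases h
  rfl

theorem red2_star_after {x : ℤ → SymB A} (hx : x ∈ (Red2 M).shift) (j : ℤ)
    (h : x j = .rm ∨ x j = .star) : x (j + 1) = .star := by
  obtain ⟨v, hv⟩ := hx
  have hj' := hv (j + 1)
  rw [red2Edge_target_of_rm_or_star (hv j) h] at hj'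
  exact red2Edge_star_of_source_t hj'

/-- Gluing `x` before `m + 1` to `y` from `k` on gives a point of `⟨G⟩`, where `▷` and `⋆` are
always followed by `⋆`. -/
theorem star_of_shift_eq_red2 {V : Type} {H : LabeledGraph V (SymB A)}
    (hsh : H.shift = (Red2 M).shift) {x y : ℤ → SymB A} {v w : ℤ → V}
    (hx : H.IsRun x v) (hy : H.IsRun y w) {m k : ℤ} (h : v (m + 1) = w k)
    (hxm : x m = .rm ∨ x m = .star) : y k = .star := by
  have hg : _ ∈ H.shift := ⟨_, hx.glue hy h⟩
  rw [hsh] at hg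
  simpa using red2_star_after hg m (by simpa using hxm)

theorem red2_accept_of_walk {i : Fin n} {p : V2 Q} :
    ∀ (u : List A) (q : Q i), (Red2 M).Walk (.st i q) (u.map .letter ++ [.rm]) p →
      (M i).evalFrom q u ∈ (M i).accept
  | [], q, ⟨_, h, _⟩ => by cases h; assumption
  | a :: u, q, ⟨_, h, hw⟩ => by
    cases h
    exact red2_accept_of_walk u _ hw

theorem red2_mem_lang_of_walk {p q : V2 Q} {u : List A}
    (h : (Red2 M).Walk p (.lm :: u.map .letter ++ [.rm]) q) : ∃ i, u ∈ (M i).lang := by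
  obtain ⟨_, hp, hw⟩ := h
  cases hp with
  | back i _ => exact ⟨i, red2_accept_of_walk u _ hw⟩

theorem red2_padded_rm_mem : padded .ell [.rm] .star ∈ (Red2 M).shift :=
  padded_mem_shift (w := []) Red2Edge.sstarEll (by simp) Red2Edge.sstarExit Red2Edge.tLoop

theorem red2_padded_inner_mem (hn : 0 < n) {s : SymB A} (hs : s.IsInner) :
    padded .ell [s] .ell ∈ (Red2 M).shift :=
  let i : Fin n := ⟨0, hn⟩
  padded_mem_shift (w := []) (Red2Edge.ellLoop i (M i).start) (by simp)
    (red2Edge_symStep i _ hs) (Red2Edge.ellLoop i _)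

theorem exists_mem_lang_of_shift_eq (hn : 0 < n) {H : LabeledGraph (Fin 2) (SymB A)}
    (hsh : H.shift = (Red2 M).shift) (u : List A) : ∃ i, u ∈ (M i).lang := by
  obtain ⟨v, hv⟩ : padded .ell [.rm] .star ∈ H.shift := hsh ▸ red2_padded_rm_mem
  have hne : v 0 ≠ v 1 := fun h => by
    simpa [padded] using star_of_shift_eq_red2 hsh hv hv (m := 0) (k := 0) h.symm (by simp [padded])
  have hloop : v 2 = v 1 := by
    by_contra h'
    simpa [padded] using star_of_shift_eq_red2 hsh hv hv (m := 1) (k := 0)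
      (by norm_num; omega) (by simp [padded])
  have hinner : ∀ s : SymB A, s.IsInner → H.Edge (v 0) s (v 0) := fun s hs => by
    obtain ⟨w, hw⟩ : padded .ell [s] .ell ∈ H.shift := hsh ▸ red2_padded_inner_mem hn hs
    have hw_eq : ∀ j, padded .ell [s] .ell j ≠ .star → w j = v 0 := fun j hj => by
      by_contra h'
      exact hj (star_of_shift_eq_red2 hsh hv hw (m := 0) (by norm_num; omega) (by simp [padded]))
    have hw0 := hw_eq 0 (by simpa [padded] using hs.ne_star)
    have hw1 := hw_eq 1 (by simp [padded])
    simpa [padded, hw0, hw1] using hw 0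
  have hx : padded .ell (.lm :: u.map .letter ++ [.rm]) .star ∈ H.shift :=
    padded_mem_shift (hinner _ (.inr (.inl rfl)))
      (by simpa using ⟨hinner _ (.inl rfl), fun a _ => hinner _ (.inr (.inr ⟨a, rfl⟩))⟩)
      (by simpa [padded] using hv 0) (by simpa [padded, hloop] using hv 1)
  obtain ⟨v', hv'⟩ := hsh ▸ hx
  exact red2_mem_lang_of_walk (IsRun.walk_padded hv')

end SecondReduction

theorem stmt15_general {n : ℕ} {Q : Fin n → Type} {A : Type}
    [∀ i, Fintype (Q i)] (hn : 0 < n)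
    (M : ∀ i, DFA' (Q i) A) :
    (⋃ i, (M i).lang) = Set.univ ↔
      ∃ H : LabeledGraph (Fin 2) (SymB A),
        H.Deterministic ∧ H.Essential ∧ H.shift = (Red2 M).shift := by
  constructor
  · intro hU
    refine ⟨(H2 A).comap finTwoEquiv, H2_deterministic.comap finTwoEquiv.injective,
      H2_essential.comap finTwoEquiv, ?_⟩
    rw [LabeledGraph.shift_comap_equiv]
    refine (H2_shift_subset_red2 hn fun w => ?_).antisymm (red2_shift_subset_H2 M)
    simpa using hU.ge (Set.mem_univ w)
  · rintro ⟨H, -, -, hsh⟩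
    exact Set.eq_univ_of_forall fun u => Set.mem_iUnion.2 (exists_mem_lang_of_shift_eq hn hsh u)

/-- Let `M_1, …, M_n` be DFAs over a common alphabet `Σ`, and let `G` be the
graph of the second reduction construction. Then `⋃ᵢ L(Mᵢ) = Σ*` iff `⟨G⟩`
has a deterministic presentation with exactly 2 vertices. -/
theorem stmt15 {n : ℕ} {Q : Fin n → Type} {A : Type}
    [Fintype A] [∀ i, Fintype (Q i)] (hn : 0 < n)
    (M : ∀ i, DFA' (Q i) A) :
    (⋃ i, (M i).lang) = Set.univ ↔
      ∃ H : LabeledGraph (Fin 2) (SymB A),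
        H.Deterministic ∧ H.Essential ∧ H.shift = (Red2 M).shift :=
  stmt15_general hn M
end

section
/- Let n ≥ 2, let M_1, …, M_n be DFAs over a common alphabet Σ, and let G be the labeled graph obtained from the third reduction construction applied to M_1, …, M_n. Then a word u ∈ (Σ ∪ {◁,▷})* is synchronizing for G if and only if there exist v ∈ (Σ ∪ {▷})*, an integer k ≥ 1, and a word w ∈ ⋂_{i=1}^n L(M_i) such that u = v ◁ w ▷^k. -/
/-- Alphabet `Σ ∪ {◁, ▷}`. -/
inductive Sym3 (A : Type) : Type
  | letter : A → Sym3 A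
  | lm : Sym3 A  -- ◁
  | rm : Sym3 A  -- ▷

/-- Vertices of the third reduction construction: the success state `t`,
the pre-initial states `p_i`, the fail states `r_i`, and the DFA states. -/
inductive V3 {n : ℕ} (Q : Fin n → Type) : Type
  | t : V3 Q
  | pre : Fin n → V3 Q
  | fail : Fin n → V3 Q
  | st : (i : Fin n) → Q i → V3 Q

/-- Edges of the third reduction construction. -/
inductive Red3Edge {n : ℕ} {Q : Fin n → Type} {A : Type} (M : ∀ i, DFA' (Q i) A) :
    V3 Q → Sym3 A → V3 Q → Prop
  /-- self loop labeled `▷` on `t` -/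
  | tLoop : Red3Edge M .t .rm .t
  /-- self loop labeled `▷` on `p_i` -/
  | preRm (i : Fin n) : Red3Edge M (.pre i) .rm (.pre i)
  /-- self loop labeled `a` on `p_i` for each `a ∈ Σ` -/
  | preLetter (i : Fin n) (a : A) : Red3Edge M (.pre i) (.letter a) (.pre i)
  /-- self loop labeled `▷` on `r_i` -/
  | failRm (i : Fin n) : Red3Edge M (.fail i) .rm (.fail i)
  /-- the embedded DFA transitions -/
  | dfaStep (i : Fin n) (q : Q i) (a : A) :
      Red3Edge M (.st i q) (.letter a) (.st i ((M i).step q a))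
  /-- edge labeled `◁` from `p_i` to `s_i` -/
  | enter (i : Fin n) : Red3Edge M (.pre i) .lm (.st i ((M i).start))
  /-- edge labeled `▷` from each accepting state of `M_i` to `t` -/
  | acc (i : Fin n) (q : Q i) : q ∈ (M i).accept → Red3Edge M (.st i q) .rm .t
  /-- edge labeled `▷` from each nonaccepting state of `M_i` to `r_i` -/
  | rej (i : Fin n) (q : Q i) : q ∉ (M i).accept → Red3Edge M (.st i q) .rm (.fail i)

/-- The labeled graph `G` of the third reduction construction. -/
def Red3 {n : ℕ} {Q : Fin n → Type} {A : Type} (M : ∀ i, DFA' (Q i) A) :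
    LabeledGraph (V3 Q) (Sym3 A) where
  Edge := Red3Edge M

namespace LabeledGraph

variable {V A : Type} {G : LabeledGraph V A}

theorem walk_append {u v : List A} {p q : V} :
    G.Walk p (u ++ v) q ↔ ∃ m, G.Walk p u m ∧ G.Walk m v q := by
  induction u generalizing p with
  | nil => simp [Walk]
  | cons a u ih =>
    simp only [List.cons_append, Walk, ih]
    exact ⟨fun ⟨r, he, m, h₁, h₂⟩ => ⟨m, ⟨r, he, h₁⟩, h₂⟩,
      fun ⟨m, ⟨r, he, h₁⟩, h₂⟩ => ⟨r, he, m, h₁, h₂⟩⟩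

theorem Deterministic.walk_unique (hG : G.Deterministic) {w : List A} {p q q' : V}
    (h : G.Walk p w q) (h' : G.Walk p w q') : q = q' := by
  induction w generalizing p with
  | nil => exact h.symm.trans h'
  | cons a w ih =>
    obtain ⟨r, he, hw⟩ := h
    obtain ⟨r', he', hw'⟩ := h'
    exact ih hw (hG p a r r' he he' ▸ hw')

theorem walk_self_of_forall_mem {w : List A} {p : V} (h : ∀ a ∈ w, G.Edge p a p) :
    G.Walk p w p := by
  induction w with
  | nil => rfl
  | cons a w ih =>
    exact ⟨p, h a List.mem_cons_self, ih fun b hb => h b (List.mem_cons_of_mem a hb)⟩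

theorem eq_replicate_of_walk {w : List A} {p q : V} {b : A}
    (hp : ∀ a r, G.Edge p a r → a = b ∧ r = p) (h : G.Walk p w q) :
    w = List.replicate w.length b := by
  induction w with
  | nil => rfl
  | cons a w ih =>
    obtain ⟨r, he, hw⟩ := h
    obtain ⟨rfl, rfl⟩ := hp a r he
    exact congrArg (a :: ·) (ih hw)

end LabeledGraph

namespace Red3

open LabeledGraph

variable {n : ℕ} {Q : Fin n → Type} {A : Type} (M : ∀ i, DFA' (Q i) A)

theorem deterministic : (Red3 M).Deterministic := by
  intro p a q q' h h'
  cases h <;> cases h' <;> first | rfl | contradiction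

variable {M}

theorem walk_pre_self {i : Fin n} {v : List (Sym3 A)} (hv : ∀ c ∈ v, c ≠ Sym3.lm) :
    (Red3 M).Walk (.pre i) v (.pre i) := by
  refine walk_self_of_forall_mem fun c hc => ?_
  cases c with
  | letter a => exact .preLetter i a
  | lm => exact absurd rfl (hv _ hc)
  | rm => exact .preRm i

theorem walk_st_letters (i : Fin n) (q : Q i) (w : List A) :
    (Red3 M).Walk (.st i q) (w.map Sym3.letter) (.st i ((M i).evalFrom q w)) := by
  induction w generalizing q with
  | nil => rfl
  | cons a w ih => exact ⟨_, .dfaStep i q a, ih _⟩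

theorem eq_append_replicate_of_walk_st {i : Fin n} {q : Q i} {z : List (Sym3 A)} {x : V3 Q}
    (h : (Red3 M).Walk (.st i q) z x) :
    ∃ (w : List A) (k : ℕ), z = w.map Sym3.letter ++ List.replicate k Sym3.rm := by
  induction z generalizing q with
  | nil => exact ⟨[], 0, rfl⟩
  | cons c z ih =>
    obtain ⟨r, he, hw⟩ := h
    cases he with
    | dfaStep _ _ a =>
      obtain ⟨w, k, rfl⟩ := ih hw
      exact ⟨a :: w, k, rfl⟩
    | acc | rej =>
      refine ⟨[], z.length + 1, congrArg (Sym3.rm :: ·) (eq_replicate_of_walk ?_ hw)⟩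
      rintro a r ⟨⟩
      exact ⟨rfl, rfl⟩

theorem exists_of_walk_of_lm_mem {u : List (Sym3 A)} {q r : V3 Q}
    (h : (Red3 M).Walk q u r) (hu : Sym3.lm ∈ u) :
    ∃ i v z, q = .pre i ∧ (∀ c ∈ v, c ≠ Sym3.lm) ∧ u = v ++ Sym3.lm :: z ∧
      (Red3 M).Walk (.st i (M i).start) z r := by
  induction u generalizing q with
  | nil => simp at hu
  | cons c u ih =>
    obtain ⟨q', he, hw⟩ := h
    by_cases hc : c = Sym3.lm
    · subst hc
      cases he with
      | enter i => exact ⟨i, [], u, rfl, by simp, rfl, hw⟩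
    · obtain ⟨j, v, z, rfl, hv, rfl, hz⟩ :=
        ih hw ((List.mem_cons.1 hu).resolve_left (Ne.symm hc))
      cases he with
      | preRm => exact ⟨j, .rm :: v, z, rfl, List.forall_mem_cons.2 ⟨nofun, hv⟩, rfl, hz⟩
      | preLetter _ a =>
        exact ⟨j, .letter a :: v, z, rfl, List.forall_mem_cons.2 ⟨nofun, hv⟩, rfl, hz⟩

open Classical in
/-- Where `pre j` ends after reading `v ◁ w ▷^k`. -/
noncomputable def target (M : ∀ i, DFA' (Q i) A) (j : Fin n) (w : List A) : ℕ → V3 Q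
  | 0 => .st j ((M j).evalFrom (M j).start w)
  | _ + 1 => if w ∈ (M j).lang then .t else .fail j

theorem walk_pre_target (j : Fin n) {v : List (Sym3 A)} (hv : ∀ c ∈ v, c ≠ Sym3.lm)
    (w : List A) (k : ℕ) :
    (Red3 M).Walk (.pre j) (v ++ Sym3.lm :: (w.map Sym3.letter ++ List.replicate k Sym3.rm))
      (target M j w k) := by
  rw [walk_append]
  refine ⟨.pre j, walk_pre_self hv, _, .enter j, ?_⟩
  rw [walk_append]
  refine ⟨_, walk_st_letters j _ w, ?_⟩
  cases k with
  | zero => rfl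
  | succ k =>
    have loop : ∀ {x : V3 Q}, (Red3 M).Edge x .rm x → (Red3 M).Walk x (List.replicate k .rm) x :=
      fun hx => walk_self_of_forall_mem fun a ha => List.eq_of_mem_replicate ha ▸ hx
    dsimp only [target]
    split_ifs with hw
    · exact ⟨.t, .acc j _ hw, loop .tLoop⟩
    · exact ⟨.fail j, .rej j _ hw, loop (.failRm j)⟩

theorem target_eq_target {j j' : Fin n} (hj : j ≠ j') {w : List A} {k : ℕ}
    (h : target M j w k = target M j' w k) : 1 ≤ k ∧ w ∈ (M j).lang := by
  cases k with
  | zero => exact absurd (V3.st.inj h).1 hj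
  | succ k =>
    refine ⟨by omega, by_contra fun hw => ?_⟩
    simp only [target, if_neg hw] at h
    split_ifs at h
    simp_all

end Red3

theorem stmt16_general {n : ℕ} {Q : Fin n → Type} {A : Type}
    (hn : 2 ≤ n)
    (M : ∀ i, DFA' (Q i) A) (u : List (Sym3 A)) :
    (Red3 M).SyncWord u ↔
      ∃ (v : List (Sym3 A)) (k : ℕ) (w : List A),
        (∀ c ∈ v, c ≠ Sym3.lm) ∧ 1 ≤ k ∧ (∀ i, w ∈ (M i).lang) ∧
        u = v ++ Sym3.lm :: (w.map Sym3.letter ++ List.replicate k Sym3.rm) := by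
  constructor
  · rintro ⟨r, hr⟩
    have hwalk : ∀ {q x}, (Red3 M).Walk q u x → x = r := fun h => hr.subset ⟨_, trivial, h⟩
    obtain ⟨q, -, hq⟩ : r ∈ (Red3 M).transSet Set.univ u := hr ▸ rfl
    have : Nontrivial (Fin n) := Fin.nontrivial_iff_two_le.2 hn
    have hlm : Sym3.lm ∈ u := by
      by_contra hu
      have hv : ∀ c ∈ u, c ≠ Sym3.lm := fun c hc => ne_of_mem_of_not_mem hc hu
      obtain ⟨i, j, hij⟩ := exists_pair_ne (Fin n)
      exact hij (V3.pre.inj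
        ((hwalk (Red3.walk_pre_self hv)).trans (hwalk (Red3.walk_pre_self hv)).symm))
    obtain ⟨i, v, z, -, hv, rfl, hz⟩ := Red3.exists_of_walk_of_lm_mem hq hlm
    obtain ⟨w, k, rfl⟩ := Red3.eq_append_replicate_of_walk_st hz
    have key : ∀ j, 1 ≤ k ∧ w ∈ (M j).lang := fun j => by
      obtain ⟨j', hj'⟩ := exists_ne j
      exact Red3.target_eq_target hj'.symm ((hwalk (Red3.walk_pre_target j hv w k)).trans
        (hwalk (Red3.walk_pre_target j' hv w k)).symm)
    exact ⟨v, k, w, hv, (key i).1, fun j => (key j).2, rfl⟩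
  · rintro ⟨v, k, w, hv, hk, hw, rfl⟩
    have ht : ∀ j, Red3.target M j w k = .t := by
      obtain ⟨k, rfl⟩ := Nat.exists_eq_add_of_le' hk
      simp [Red3.target, hw]
    refine ⟨.t, Set.eq_singleton_iff_unique_mem.2 ⟨⟨.pre ⟨0, by omega⟩, trivial, ?_⟩, ?_⟩⟩
    · exact ht _ ▸ Red3.walk_pre_target _ hv w k
    · rintro x ⟨q, -, hq⟩
      obtain ⟨i, -, -, rfl, -⟩ := Red3.exists_of_walk_of_lm_mem hq (by simp)
      exact ((Red3.deterministic M).walk_unique hq (Red3.walk_pre_target i hv w k)).trans (ht i)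

/-- Let `n ≥ 2`, let `M_1, …, M_n` be DFAs over a common alphabet `Σ`, and let
`G` be the graph of the third reduction construction. Then a word
`u ∈ (Σ ∪ {◁,▷})*` is synchronizing for `G` iff there exist `v ∈ (Σ ∪ {▷})*`
(i.e. `v` avoids `◁`), an integer `k ≥ 1`, and `w ∈ ⋂ᵢ L(Mᵢ)` with
`u = v ◁ w ▷^k`. -/
theorem stmt16 {n : ℕ} {Q : Fin n → Type} {A : Type}
    [Fintype A] [∀ i, Fintype (Q i)] (hn : 2 ≤ n)
    (M : ∀ i, DFA' (Q i) A) (u : List (Sym3 A)) :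
    (Red3 M).SyncWord u ↔
      ∃ (v : List (Sym3 A)) (k : ℕ) (w : List A),
        (∀ c ∈ v, c ≠ Sym3.lm) ∧ 1 ≤ k ∧ (∀ i, w ∈ (M i).lang) ∧
        u = v ++ Sym3.lm :: (w.map Sym3.letter ++ List.replicate k Sym3.rm) :=
  stmt16_general hn M u
end
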